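/- Suppose F = α + a + *b + *β is a C¹ multivector field on an open Ω ⊆ ℝ³ satisfying the Dirac equation DF = ikF with k ∈ ℂ. Then the scalar and 3-vector parts vanish identically (α = 0 and β = 0) if and only if F satisfies dF = ik T⁺F, where dF = e₁∧∂₁F + e₂∧∂₂F + e₃∧∂₃F is the exterior derivative and T⁺F = ½(F + F̂) is the even-grade (spacelike) part. -/

import Mathlib

noncomputable section

/-- Complex Euclidean dot product (bilinear extension) on `ℂ³`. -/
def cdot (u v : Fin 3 → ℂ) : ℂ := u 0 * v 0 + u 1 * v 1 + u 2 * v 2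

/-- Bilinear extension of the cross product to `ℂ³`. -/
def ccross (u v : Fin 3 → ℂ) : Fin 3 → ℂ :=
  ![u 1 * v 2 - u 2 * v 1, u 2 * v 0 - u 0 * v 2, u 0 * v 1 - u 1 * v 0]

/-- The eight-dimensional complex Clifford algebra `Cl(ℂ³)` of `ℝ³`, identified
as a linear space with `∧ℂ³`: a multivector is `w = α + a + *b + *β` with
scalar part `α`, vector part `a`, bivector part `*b` and 3-vector part `*β`. -/
structure Cl3 where
  α : ℂ
  a : Fin 3 → ℂ
  b : Fin 3 → ℂ
  β : ℂ

instance : Zero Cl3 := ⟨⟨0, 0, 0, 0⟩⟩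
instance : One Cl3 := ⟨⟨1, 0, 0, 0⟩⟩
instance : Add Cl3 := ⟨fun x y => ⟨x.α + y.α, x.a + y.a, x.b + y.b, x.β + y.β⟩⟩
instance : Neg Cl3 := ⟨fun x => ⟨-x.α, -x.a, -x.b, -x.β⟩⟩
instance : Sub Cl3 := ⟨fun x y => x + -y⟩
instance : SMul ℂ Cl3 := ⟨fun c x => ⟨c * x.α, c • x.a, c • x.b, c * x.β⟩⟩

/-- The Clifford product on `∧ℂ³`, with the convention `u u = |u|²` for
vectors `u`.  It is determined by the product of a vector with a multivector,
`u w = u·a + (uα − u×b) + *(u×a + uβ) + *(u·b)` for `w = α + a + *b + *β`. -/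
instance : Mul Cl3 := ⟨fun x y =>
  ⟨x.α * y.α + cdot x.a y.a - cdot x.b y.b - x.β * y.β,
   x.α • y.a + y.α • x.a - ccross x.a y.b - ccross x.b y.a - y.β • x.b - x.β • y.b,
   x.α • y.b + y.α • x.b + ccross x.a y.a - ccross x.b y.b + x.β • y.a + y.β • x.a,
   x.α * y.β + x.β * y.α + cdot x.a y.b + cdot x.b y.a⟩⟩

/-- The embedding of real vectors `ℝ³ ⊂ Cl(ℂ³)`. -/
def vec (u : Fin 3 → ℝ) : Cl3 := ⟨0, fun i => (u i : ℂ), 0, 0⟩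

/-- The grade involution `ŵ`: negation of the vector (degree-1) and 3-vector
(degree-3) parts. -/
def gradeInv (w : Cl3) : Cl3 := ⟨w.α, -w.a, w.b, -w.β⟩

/-- Exterior product of a complex vector with a multivector:
`u ∧ w = uα + *(u×a) + *(u·b)` for `w = α + a + *b + *β`. -/
def wedgeC (u : Fin 3 → ℂ) (w : Cl3) : Cl3 := ⟨0, w.α • u, ccross u w.a, cdot u w.b⟩

/-- Exterior product of a real vector with a multivector. -/
def wedgeVec (u : Fin 3 → ℝ) (w : Cl3) : Cl3 := wedgeC (fun i => (u i : ℂ)) w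

/-- Partial derivative `∂ᵢ f` of a complex-valued function on `ℝ³`. -/
def pdC (i : Fin 3) (f : (Fin 3 → ℝ) → ℂ) (x : Fin 3 → ℝ) : ℂ :=
  fderiv ℝ f x (Pi.single i 1)

/-- Componentwise partial derivative `∂ᵢ F` of a multivector field. -/
def pdCl (i : Fin 3) (F : (Fin 3 → ℝ) → Cl3) (x : Fin 3 → ℝ) : Cl3 :=
  ⟨pdC i (fun y => (F y).α) x, fun j => pdC i (fun y => (F y).a j) x,
   fun j => pdC i (fun y => (F y).b j) x, pdC i (fun y => (F y).β) x⟩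

/-- The standard basis vector `eᵢ` of `ℝ³`. -/
def basisVec (i : Fin 3) : Fin 3 → ℝ := Pi.single i 1

/-- The Hodge–Dirac operator `D F = e₁ ∂₁F + e₂ ∂₂F + e₃ ∂₃F`, the nabla
symbol acting via the Clifford product. -/
def Dirac (F : (Fin 3 → ℝ) → Cl3) (x : Fin 3 → ℝ) : Cl3 :=
  vec (basisVec 0) * pdCl 0 F x + vec (basisVec 1) * pdCl 1 F x
    + vec (basisVec 2) * pdCl 2 F x

/-- The exterior derivative `d F = e₁ ∧ ∂₁F + e₂ ∧ ∂₂F + e₃ ∧ ∂₃F`, the nabla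
symbol acting via the exterior product. -/
def extDerivCl (F : (Fin 3 → ℝ) → Cl3) (x : Fin 3 → ℝ) : Cl3 :=
  wedgeVec (basisVec 0) (pdCl 0 F x) + wedgeVec (basisVec 1) (pdCl 1 F x)
    + wedgeVec (basisVec 2) (pdCl 2 F x)

/-- Divergence `∇·v` of a complex vector field on `ℝ³`. -/
def divC (v : (Fin 3 → ℝ) → Fin 3 → ℂ) (x : Fin 3 → ℝ) : ℂ :=
  pdC 0 (fun y => v y 0) x + pdC 1 (fun y => v y 1) x + pdC 2 (fun y => v y 2) x

/-- Curl `∇×v` of a complex vector field on `ℝ³`. -/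
def curlC (v : (Fin 3 → ℝ) → Fin 3 → ℂ) (x : Fin 3 → ℝ) : Fin 3 → ℂ :=
  ![pdC 1 (fun y => v y 2) x - pdC 2 (fun y => v y 1) x,
    pdC 2 (fun y => v y 0) x - pdC 0 (fun y => v y 2) x,
    pdC 0 (fun y => v y 1) x - pdC 1 (fun y => v y 0) x]

/-- Gradient `∇f` of a complex-valued function on `ℝ³`. -/
def gradC (f : (Fin 3 → ℝ) → ℂ) (x : Fin 3 → ℝ) : Fin 3 → ℂ :=
  fun i => pdC i f x

/-! In components, `dF = ∇α + *(∇×a) + *(∇·b)`, while `DF = ikF` reads `∇·a = ikα`,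
`∇α − ∇×b = ika`, `∇×a + ∇β = ikb` and `∇·b = ikβ`. Since `T⁺F = α + *b`, comparing the two
shows that at a point `dF = ik T⁺F` holds exactly when `α`, `β`, `∇α` and `∇β` vanish there; on an
open set the vanishing of `α` and `β` forces that of their gradients. -/

attribute [ext] Cl3

namespace Cl3

@[simp] lemma add_α (x y : Cl3) : (x + y).α = x.α + y.α := rfl
@[simp] lemma add_a (x y : Cl3) : (x + y).a = x.a + y.a := rfl
@[simp] lemma add_b (x y : Cl3) : (x + y).b = x.b + y.b := rfl
@[simp] lemma add_β (x y : Cl3) : (x + y).β = x.β + y.β := rfl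
@[simp] lemma smul_α (c : ℂ) (x : Cl3) : (c • x).α = c * x.α := rfl
@[simp] lemma smul_a (c : ℂ) (x : Cl3) : (c • x).a = c • x.a := rfl
@[simp] lemma smul_b (c : ℂ) (x : Cl3) : (c • x).b = c • x.b := rfl
@[simp] lemma smul_β (c : ℂ) (x : Cl3) : (c • x).β = c * x.β := rfl

@[simp] lemma mul_α (x y : Cl3) :
    (x * y).α = x.α * y.α + cdot x.a y.a - cdot x.b y.b - x.β * y.β := rfl
@[simp] lemma mul_a (x y : Cl3) : (x * y).a =
    x.α • y.a + y.α • x.a - ccross x.a y.b - ccross x.b y.a - y.β • x.b - x.β • y.b := rfl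
@[simp] lemma mul_b (x y : Cl3) : (x * y).b =
    x.α • y.b + y.α • x.b + ccross x.a y.a - ccross x.b y.b + x.β • y.a + y.β • x.a := rfl
@[simp] lemma mul_β (x y : Cl3) :
    (x * y).β = x.α * y.β + x.β * y.α + cdot x.a y.b + cdot x.b y.a := rfl

end Cl3

@[simp] lemma pdCl_α (i : Fin 3) (F : (Fin 3 → ℝ) → Cl3) (x : Fin 3 → ℝ) :
    (pdCl i F x).α = pdC i (fun y => (F y).α) x := rfl
@[simp] lemma pdCl_a (i : Fin 3) (F : (Fin 3 → ℝ) → Cl3) (x : Fin 3 → ℝ) (j : Fin 3) :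
    (pdCl i F x).a j = pdC i (fun y => (F y).a j) x := rfl
@[simp] lemma pdCl_b (i : Fin 3) (F : (Fin 3 → ℝ) → Cl3) (x : Fin 3 → ℝ) (j : Fin 3) :
    (pdCl i F x).b j = pdC i (fun y => (F y).b j) x := rfl
@[simp] lemma pdCl_β (i : Fin 3) (F : (Fin 3 → ℝ) → Cl3) (x : Fin 3 → ℝ) :
    (pdCl i F x).β = pdC i (fun y => (F y).β) x := rfl

lemma vec_mul (u : Fin 3 → ℝ) (w : Cl3) :
    vec u * w = ⟨cdot (fun i => (u i : ℂ)) w.a,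
      w.α • (fun i => (u i : ℂ)) - ccross (fun i => (u i : ℂ)) w.b,
      ccross (fun i => (u i : ℂ)) w.a + w.β • (fun i => (u i : ℂ)),
      cdot (fun i => (u i : ℂ)) w.b⟩ := by
  refine Cl3.ext ?_ (funext fun i => ?_) (funext fun i => ?_) ?_
  all_goals try fin_cases i
  all_goals simp [vec, cdot, ccross, Matrix.vecHead, Matrix.vecTail]

lemma half_smul_add_gradeInv (w : Cl3) :
    (1 / 2 : ℂ) • (w + gradeInv w) = ⟨w.α, 0, w.b, 0⟩ := by
  ext <;> simp [gradeInv] <;> ring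

lemma dirac_apply (F : (Fin 3 → ℝ) → Cl3) (x : Fin 3 → ℝ) :
    Dirac F x = ⟨divC (fun y => (F y).a) x,
      gradC (fun y => (F y).α) x - curlC (fun y => (F y).b) x,
      curlC (fun y => (F y).a) x + gradC (fun y => (F y).β) x,
      divC (fun y => (F y).b) x⟩ := by
  refine Cl3.ext ?_ (funext fun i => ?_) (funext fun i => ?_) ?_
  all_goals try fin_cases i
  all_goals simp [Dirac, vec_mul, divC, gradC, curlC, cdot, ccross, basisVec, Matrix.vecHead,
    Matrix.vecTail]
  all_goals ring

lemma extDerivCl_apply (F : (Fin 3 → ℝ) → Cl3) (x : Fin 3 → ℝ) :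
    extDerivCl F x = ⟨0, gradC (fun y => (F y).α) x,
      curlC (fun y => (F y).a) x, divC (fun y => (F y).b) x⟩ := by
  refine Cl3.ext ?_ (funext fun i => ?_) (funext fun i => ?_) ?_
  all_goals try fin_cases i
  all_goals simp [extDerivCl, wedgeVec, wedgeC, divC, gradC, curlC, cdot, ccross, basisVec,
    Matrix.vecHead, Matrix.vecTail]
  all_goals ring

lemma gradC_eq_zero_of_eqOn {Ω : Set (Fin 3 → ℝ)} (hΩ : IsOpen Ω) {f : (Fin 3 → ℝ) → ℂ}
    (hf : Set.EqOn f 0 Ω) {x : Fin 3 → ℝ} (hx : x ∈ Ω) : gradC f x = 0 := by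
  funext i
  simp [gradC, pdC, (hf.eventuallyEq_of_mem (hΩ.mem_nhds hx)).fderiv_eq]

lemma extDerivCl_eq_smul_half_add_gradeInv_iff {F : (Fin 3 → ℝ) → Cl3} {x : Fin 3 → ℝ} {c : ℂ}
    (hc : c ≠ 0) (hD : Dirac F x = c • F x) :
    extDerivCl F x = c • ((1 / 2 : ℂ) • (F x + gradeInv (F x))) ↔
      (F x).α = 0 ∧ (F x).β = 0 ∧ gradC (fun y => (F y).α) x = 0 ∧
        gradC (fun y => (F y).β) x = 0 := by
  rw [dirac_apply] at hD
  obtain ⟨-, -, hcurl, hdiv⟩ := Cl3.ext_iff.1 hD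
  simp only [Cl3.smul_b, Cl3.smul_β] at hcurl hdiv
  rw [extDerivCl_apply, half_smul_add_gradeInv, Cl3.ext_iff]
  simp only [Cl3.smul_α, Cl3.smul_a, Cl3.smul_b, Cl3.smul_β, smul_zero, mul_zero, ← hcurl, hdiv,
    left_eq_add, zero_eq_mul, mul_eq_zero, hc, false_or]
  tauto

theorem maxwell_constraint_general (Ω : Set (Fin 3 → ℝ)) (hΩ : IsOpen Ω)
    (k : ℂ) (hk : k ≠ 0) (F : (Fin 3 → ℝ) → Cl3)
    (hdirac : ∀ x ∈ Ω, Dirac F x = (Complex.I * k) • F x) :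
    (∀ x ∈ Ω, (F x).α = 0 ∧ (F x).β = 0) ↔
    (∀ x ∈ Ω, extDerivCl F x
        = (Complex.I * k) • ((1 / 2 : ℂ) • (F x + gradeInv (F x)))) := by
  have hIk : Complex.I * k ≠ 0 := mul_ne_zero Complex.I_ne_zero hk
  constructor
  · intro h x hx
    have hα : Set.EqOn (fun y => (F y).α) 0 Ω := fun y hy => (h y hy).1
    have hβ : Set.EqOn (fun y => (F y).β) 0 Ω := fun y hy => (h y hy).2
    exact (extDerivCl_eq_smul_half_add_gradeInv_iff hIk (hdirac x hx)).2
      ⟨hα hx, hβ hx, gradC_eq_zero_of_eqOn hΩ hα hx, gradC_eq_zero_of_eqOn hΩ hβ hx⟩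
  · intro h x hx
    obtain ⟨hα, hβ, -, -⟩ :=
      (extDerivCl_eq_smul_half_add_gradeInv_iff hIk (hdirac x hx)).1 (h x hx)
    exact ⟨hα, hβ⟩

/-- Let `F = α + a + *b + *β` be a `C¹` multivector field on an open
`Ω ⊆ ℝ³` satisfying the Dirac equation `D F = ik F` (`k ≠ 0`). Then the
scalar and 3-vector parts vanish identically on `Ω` if and only if
`d F = ik T⁺F` on `Ω`, where `T⁺F = ½(F + F̂)` is the even-grade part. -/
theorem maxwell_constraint (Ω : Set (Fin 3 → ℝ)) (hΩ : IsOpen Ω)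
    (k : ℂ) (hk : k ≠ 0) (F : (Fin 3 → ℝ) → Cl3)
    (hreg : ∀ x ∈ Ω, DifferentiableAt ℝ (fun y => (F y).α) x ∧
        (∀ j, DifferentiableAt ℝ (fun y => (F y).a j) x) ∧
        (∀ j, DifferentiableAt ℝ (fun y => (F y).b j) x) ∧
        DifferentiableAt ℝ (fun y => (F y).β) x)
    (hdirac : ∀ x ∈ Ω, Dirac F x = (Complex.I * k) • F x) :
    (∀ x ∈ Ω, (F x).α = 0 ∧ (F x).β = 0) ↔
    (∀ x ∈ Ω, extDerivCl F x
        = (Complex.I * k) • ((1 / 2 : ℂ) • (F x + gradeInv (F x)))) :=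
  maxwell_constraint_general Ω hΩ k hk F hdirac
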